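/- arXiv:1404.5184 — 2 statements merged into one kernel-verified Lean document; each statement's English description precedes it below -/
import Mathlib

section
/- If R is a tolerance induced by an irredundant covering H of U, then every member of H is an R-block, i.e., H ⊆ B(R). -/
variable {α : Type*}

/-- The `R`-neighbourhood of `x`. -/
def nbhd (R : α → α → Prop) (x : α) : Set α := {y | R x y}

/-- A nonempty set all of whose pairs are related: an `R`-preblock. -/
def IsPreblock (R : α → α → Prop) (X : Set α) : Prop :=
  X.Nonempty ∧ ∀ a ∈ X, ∀ b ∈ X, R a b

/-- An `R`-block: a maximal `R`-preblock. -/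
def IsBlock (R : α → α → Prop) (B : Set α) : Prop :=
  IsPreblock R B ∧ ∀ X, IsPreblock R X → B ⊆ X → B = X

/-- A covering of the universe by nonempty sets. -/
def IsCovering (H : Set (Set α)) : Prop :=
  (∀ X ∈ H, X.Nonempty) ∧ ⋃₀ H = Set.univ

/-- An irredundant covering: no member can be removed. -/
def IsIrredundant (H : Set (Set α)) : Prop :=
  IsCovering H ∧ ∀ X ∈ H, ¬ IsCovering (H \ {X})

/-- The family `H` induces the relation `R`. -/
def Induces (H : Set (Set α)) (R : α → α → Prop) : Prop :=
  ∀ a b, R a b ↔ ∃ X ∈ H, a ∈ X ∧ b ∈ X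

/-- Minimal element of a quasiorder. -/
def QMinimal (le : α → α → Prop) (m : α) : Prop := ∀ y, le y m → le m y

/-- Upset of an element. -/
def upset (le : α → α → Prop) (m : α) : Set α := {y | le m y}

/-- The tolerance `≈ = ≳ ∘ ≲` determined by a quasiorder. -/
def approx (le : α → α → Prop) (x y : α) : Prop := ∃ a, le a x ∧ le a y

/-- Bounded by minimal elements. -/
def BoundedByMinimals (le : α → α → Prop) : Prop :=
  ∀ x, ∃ m, QMinimal le m ∧ le m x

/-- The quasiorder `≲_R` determined by a tolerance. -/
def tolLe (R : α → α → Prop) (x y : α) : Prop := nbhd R x ⊆ nbhd R y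

/-- Helly number 2 for a quasiordered set. -/
def Helly2 (le : α → α → Prop) : Prop :=
  ∀ A : Set α, A.Nonempty → (∀ x ∈ A, ∀ y ∈ A, ∃ a, le a x ∧ le a y) →
    ∃ a, ∀ x ∈ A, le a x

/-- A canonical base: a family of `R`-blocks inducing `R`, no member removable. -/
def CanonicalBase (R : α → α → Prop) (K : Set (Set α)) : Prop :=
  (∀ X ∈ K, IsBlock R X) ∧ Induces K R ∧ ∀ X ∈ K, ¬ Induces (K \ {X}) R

/-! An irredundant covering has, in every member `X`, a point `x` lying in no other member.
Since `H` induces `R`, the neighbourhood `R(x)` is then exactly `X`; and a preblock containing `x`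
lies inside `R(x)`, so `X`, a preblock that contains `x`, cannot be properly enlarged. -/

theorem IsIrredundant.exists_private_mem {H : Set (Set α)} (hH : IsIrredundant H) {X : Set α}
    (hX : X ∈ H) : ∃ x ∈ X, ∀ Y ∈ H, x ∈ Y → Y = X := by
  obtain ⟨⟨hne, hcov⟩, hirr⟩ := hH
  obtain ⟨x, hx⟩ : ∃ x, x ∉ ⋃₀ (H \ {X}) := by
    by_contra! h
    exact hirr X hX ⟨fun Y hY => hne Y hY.1, Set.eq_univ_of_forall h⟩
  obtain ⟨Z, hZ, hxZ⟩ : x ∈ ⋃₀ H := hcov ▸ Set.mem_univ x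
  have hprivate : ∀ Y ∈ H, x ∈ Y → Y = X := fun Y hY hxY => by
    by_contra hYX
    exact hx ⟨Y, ⟨hY, hYX⟩, hxY⟩
  exact ⟨x, hprivate Z hZ hxZ ▸ hxZ, hprivate⟩

theorem Induces.nbhd_eq_of_private_mem {H : Set (Set α)} {R : α → α → Prop} (hind : Induces H R)
    {X : Set α} (hX : X ∈ H) {x : α} (hxX : x ∈ X) (hprivate : ∀ Y ∈ H, x ∈ Y → Y = X) :
    nbhd R x = X := by
  ext y
  change R x y ↔ y ∈ X
  rw [hind]
  constructor
  · rintro ⟨Y, hY, hxY, hyY⟩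
    exact hprivate Y hY hxY ▸ hyY
  · exact fun hy => ⟨X, hX, hxX, hy⟩

theorem Induces.isPreblock_of_mem {H : Set (Set α)} {R : α → α → Prop} (hind : Induces H R)
    {X : Set α} (hX : X ∈ H) (hne : X.Nonempty) : IsPreblock R X :=
  ⟨hne, fun a ha b hb => (hind a b).2 ⟨X, hX, ha, hb⟩⟩

theorem IsPreblock.subset_nbhd {R : α → α → Prop} {Y : Set α} (hY : IsPreblock R Y) {x : α}
    (hx : x ∈ Y) : Y ⊆ nbhd R x :=
  fun y hy => hY.2 x hx y hy

theorem IsPreblock.isBlock_of_nbhd_subset {R : α → α → Prop} {X : Set α} (hX : IsPreblock R X)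
    {x : α} (hxX : x ∈ X) (hnbhd : nbhd R x ⊆ X) : IsBlock R X :=
  ⟨hX, fun _ hY hXY => hXY.antisymm ((hY.subset_nbhd (hXY hxX)).trans hnbhd)⟩

theorem stmt6 (R : α → α → Prop) (H : Set (Set α))
    (hH : IsIrredundant H) (hind : Induces H R) :
    ∀ X ∈ H, IsBlock R X := by
  intro X hX
  obtain ⟨x, hxX, hprivate⟩ := hH.exists_private_mem hX
  exact (hind.isPreblock_of_mem hX ⟨x, hxX⟩).isBlock_of_nbhd_subset hxX
    (hind.nbhd_eq_of_private_mem hX hxX hprivate).le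
end

section
/- A tolerance R on U is induced by an irredundant covering if and only if the quasiordered set (U, ≲_R) (where x ≲_R y iff R(x) ⊆ R(y)) is bounded by minimal elements and R equals the relation ≈_R = ≳_R ∘ ≲_R. -/
variable {α : Type*}

/-!
In an irredundant covering every member `X` has a point `a` lying in no other member; then
`R(a) = X`, so `a` is `≲_R`-minimal and lies below every point of `X`. This gives the minimal
bounds and shows that any two `R`-related points (which share a member) have a common lower bound.
Conversely, the upsets of the minimal elements of a quasiorder bounded by minimal elements form an
irredundant covering inducing `≈`: if `m` lies in the upset of a minimal `m'`, then
`m' ≲ m ≲ m'`, so the two upsets coincide and the upset of `m` is the only member containing `m`.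
-/

section Induced

variable {H : Set (Set α)} {R : α → α → Prop}

lemma Induces.rel_refl (hR : Induces H R) (hcov : IsCovering H) (a : α) : R a a := by
  obtain ⟨X, hX, ha⟩ : a ∈ ⋃₀ H := hcov.2 ▸ Set.mem_univ a
  exact (hR a a).2 ⟨X, hX, ha, ha⟩

lemma Induces.rel_symm (hR : Induces H R) {a b : α} (h : R a b) : R b a := by
  obtain ⟨X, hX, ha, hb⟩ := (hR a b).1 h
  exact (hR b a).2 ⟨X, hX, hb, ha⟩

lemma Induces.subset_nbhd (hR : Induces H R) {X : Set α} (hX : X ∈ H) {x : α} (hx : x ∈ X) :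
    X ⊆ nbhd R x :=
  fun _ hy => (hR x _).2 ⟨X, hX, hx, hy⟩

lemma Induces.nbhd_eq (hR : Induces H R) {X : Set α} (hX : X ∈ H) {a : α} (ha : a ∈ X)
    (hsole : ∀ Y ∈ H, a ∈ Y → Y = X) : nbhd R a = X := by
  refine (Set.Subset.antisymm (fun b hb => ?_) (hR.subset_nbhd hX ha))
  obtain ⟨Y, hY, haY, hbY⟩ := (hR a b).1 hb
  exact hsole Y hY haY ▸ hbY

lemma IsIrredundant.exists_mem_forall_eq (hH : IsIrredundant H) {X : Set α} (hX : X ∈ H) :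
    ∃ a ∈ X, ∀ Y ∈ H, a ∈ Y → Y = X := by
  by_contra! hshared
  refine hH.2 X hX ⟨fun Y hY => hH.1.1 Y hY.1, Set.eq_univ_of_forall fun x => ?_⟩
  obtain ⟨Y, hY, hxY⟩ : x ∈ ⋃₀ H := hH.1.2 ▸ Set.mem_univ x
  by_cases hYX : Y = X
  · obtain ⟨Z, hZ, hxZ, hZX⟩ := hshared x (hYX ▸ hxY)
    exact ⟨Z, ⟨hZ, hZX⟩, hxZ⟩
  · exact ⟨Y, ⟨hY, hYX⟩, hxY⟩

lemma rel_of_approx_tolLe (hrefl : ∀ a, R a a) (hsymm : ∀ a b, R a b → R b a) {x y : α}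
    (h : approx (tolLe R) x y) : R x y := by
  obtain ⟨a, hax, hay⟩ := h
  exact hsymm _ _ (hay (hsymm _ _ (hax (hrefl a))))

lemma Induces.exists_qMinimal_tolLe (hR : Induces H R) (hH : IsIrredundant H) {X : Set α}
    (hX : X ∈ H) : ∃ a, QMinimal (tolLe R) a ∧ ∀ x ∈ X, tolLe R a x := by
  obtain ⟨a, ha, hsole⟩ := hH.exists_mem_forall_eq hX
  have hnbhd : nbhd R a = X := hR.nbhd_eq hX ha hsole
  have below : ∀ x ∈ X, tolLe R a x := fun x hx => hnbhd.subset.trans (hR.subset_nbhd hX hx)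
  refine ⟨a, fun y hya => below y ?_, below⟩
  exact hnbhd ▸ hya (hR.rel_refl hH.1 y)

theorem Induces.boundedByMinimals_tolLe (hR : Induces H R) (hH : IsIrredundant H) :
    BoundedByMinimals (tolLe R) := by
  intro x
  obtain ⟨X, hX, hx⟩ : x ∈ ⋃₀ H := hH.1.2 ▸ Set.mem_univ x
  obtain ⟨a, hmin, ha⟩ := hR.exists_qMinimal_tolLe hH hX
  exact ⟨a, hmin, ha x hx⟩

theorem Induces.rel_iff_approx_tolLe (hR : Induces H R) (hH : IsIrredundant H) (x y : α) :
    R x y ↔ approx (tolLe R) x y := by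
  refine ⟨fun hxy => ?_, rel_of_approx_tolLe (hR.rel_refl hH.1) fun _ _ => hR.rel_symm⟩
  obtain ⟨X, hX, hx, hy⟩ := (hR x y).1 hxy
  obtain ⟨a, -, ha⟩ := hR.exists_qMinimal_tolLe hH hX
  exact ⟨a, ha x hx, ha y hy⟩

end Induced

instance (R : α → α → Prop) : IsPreorder α (tolLe R) where
  refl _ := subset_rfl
  trans _ _ _ := Set.Subset.trans

def minimalUpsets (le : α → α → Prop) : Set (Set α) := upset le '' {m | QMinimal le m}

section Quasiorder

variable {le : α → α → Prop} [IsPreorder α le]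

theorem isIrredundant_minimalUpsets (hbdd : BoundedByMinimals le) :
    IsIrredundant (minimalUpsets le) := by
  refine ⟨⟨?_, Set.eq_univ_of_forall fun x => ?_⟩, ?_⟩
  · rintro _ ⟨m, -, rfl⟩
    exact ⟨m, refl_of le m⟩
  · obtain ⟨m, hm, hmx⟩ := hbdd x
    exact ⟨upset le m, ⟨m, hm, rfl⟩, hmx⟩
  · rintro _ ⟨m, hm, rfl⟩ ⟨-, hcov⟩
    obtain ⟨_, ⟨⟨m', -, rfl⟩, hne⟩, hm'm⟩ : m ∈ ⋃₀ (minimalUpsets le \ {upset le m}) :=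
      hcov ▸ Set.mem_univ m
    have hmm' : le m m' := hm m' hm'm
    exact hne <| Set.Subset.antisymm (fun _ hy => trans_of le hmm' hy)
      (fun _ hy => trans_of le hm'm hy)

theorem induces_minimalUpsets_approx (hbdd : BoundedByMinimals le) :
    Induces (minimalUpsets le) (approx le) := by
  refine fun a b => ⟨fun ⟨c, hca, hcb⟩ => ?_, ?_⟩
  · obtain ⟨m, hm, hmc⟩ := hbdd c
    exact ⟨upset le m, ⟨m, hm, rfl⟩, trans_of le hmc hca, trans_of le hmc hcb⟩
  · rintro ⟨_, ⟨m, -, rfl⟩, ha, hb⟩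
    exact ⟨m, ha, hb⟩

end Quasiorder

theorem stmt12_general (R : α → α → Prop) :
    (∃ H : Set (Set α), IsIrredundant H ∧ Induces H R) ↔
      (BoundedByMinimals (tolLe R) ∧ ∀ x y, R x y ↔ approx (tolLe R) x y) := by
  constructor
  · rintro ⟨H, hH, hR⟩
    exact ⟨hR.boundedByMinimals_tolLe hH, hR.rel_iff_approx_tolLe hH⟩
  · rintro ⟨hbdd, happrox⟩
    exact ⟨minimalUpsets (tolLe R), isIrredundant_minimalUpsets hbdd,
      fun a b => (happrox a b).trans (induces_minimalUpsets_approx hbdd a b)⟩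

theorem stmt12 (R : α → α → Prop) (hrefl : Reflexive R) (hsymm : Symmetric R) :
    (∃ H : Set (Set α), IsIrredundant H ∧ Induces H R) ↔
      (BoundedByMinimals (tolLe R) ∧ ∀ x y, R x y ↔ approx (tolLe R) x y) :=
  stmt12_general R
end
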